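/- Let T be a monad on C, F : C → C a functor lifting to F̄ on Kl(T), and suppose F admits free algebras i_X in C. Then i_X^♯ = η_{F*X} ∘ i_X : F F*X + X → T F*X is the free F̄-algebra over X in Kl(T). -/

import Mathlib

/-!
STATEMENT 8: Let `T` be a monad on `C`, `F : C ⥤ C` a functor lifting to `F̄` on
`Kl(T)`, and suppose `F` admits free algebras `i_X` (initial `F(−)+X`-algebras) in `C`.
Then `i_X^♯ = η_{F*X} ∘ i_X : F F*X + X → T F*X` is the free `F̄`-algebra over `X`
(the initial `F̄(−)+X`-algebra) in `Kl(T)`.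
-/

open CategoryTheory CategoryTheory.Limits

variable {C : Type*} [Category C] [HasBinaryCoproducts C]

/-- The endofunctor `F(−) + X`. -/
@[simps]
noncomputable def plusConst (F : C ⥤ C) (X : C) : C ⥤ C where
  obj Y := F.obj Y ⨿ X
  map f := coprod.map (F.map f) (𝟙 X)

variable (T : Monad C) [HasBinaryCoproducts (Kleisli T)]

/-- An object of `C` viewed as an object of the Kleisli category of `T`. -/
def kObj (X : C) : Kleisli T := Kleisli.mk T X

/-- A morphism `f : X ⟶ TY` of `C` viewed as a Kleisli morphism `X ⊸ Y`. -/
def kHom {X Y : C} (f : X ⟶ T.obj Y) : kObj T X ⟶ kObj T Y := Kleisli.Hom.mk f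

/-- The endofunctor `F̄(−) + X` on `Kl(T)`. -/
@[simps]
noncomputable def plusConstKl (F' : Kleisli T ⥤ Kleisli T) (X : Kleisli T) :
    Kleisli T ⥤ Kleisli T where
  obj Y := F'.obj Y ⨿ X
  map f := coprod.map (F'.map f) (𝟙 X)

/-- The `F̄(−)+X`-algebra `i_X^♯ = η ∘ i_X` on the carrier `F*X` of the initial
`F(−)+X`-algebra `i_X`: its components are `η ∘ (i_X ∘ ι¹)` and `η ∘ (i_X ∘ ι²)`,
cotupled in `Kl(T)` (using `F̄(F*X) = F(F*X)`, which holds since `F̄` lifts `F`). -/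
noncomputable def sharpAlgebra (F : C ⥤ C)
    [∀ X : C, HasInitial (Endofunctor.Algebra (plusConst F X))]
    (F' : Kleisli T ⥤ Kleisli T)
    (hlift : Kleisli.Adjunction.toKleisli T ⋙ F' = F ⋙ Kleisli.Adjunction.toKleisli T)
    (X : C) : Endofunctor.Algebra (plusConstKl T F' (kObj T X)) :=
  { a := kObj T (⊥_ (Endofunctor.Algebra (plusConst F X))).a
    str := coprod.desc
      (eqToHom (Functor.congr_obj hlift (⊥_ (Endofunctor.Algebra (plusConst F X))).a) ≫
        kHom T ((coprod.inl ≫ (⊥_ (Endofunctor.Algebra (plusConst F X))).str) ≫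
          T.η.app _))
      (kHom T ((coprod.inr ≫ (⊥_ (Endofunctor.Algebra (plusConst F X))).str) ≫
          T.η.app _)) }

/-!
Write `J ⊣ U` for the Kleisli adjunction. An `F̄(−)+X`-algebra `b : F̄B + X ⊸ B` induces an
`F(−)+X`-algebra on `TB = U B`, whose structure map is the transpose of `F̄ ε_B` followed by `b`
(this uses `F̄ J = J F` to see `F̄ J (TB)` as `J F (TB)`). A Kleisli morphism `F*X ⊸ B`, i.e. a
morphism `F*X ⟶ TB`, is an algebra morphism out of `i_X^♯` iff it is an algebra morphism out of
`i_X` in `C`, so initiality of `i_X` transfers to `i_X^♯`. The argument works for any adjunction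
`L ⊣ R` together with an isomorphism `F' L ≅ L F`.
-/

section PlusConstAlgebra

variable {E : Type*} [Category E] [HasBinaryCoproducts E] {G : E ⥤ E} {Z : E}

lemma plusConst_map_comp_str_eq_iff {A₀ A₁ : Endofunctor.Algebra (plusConst G Z)}
    (f : A₀.a ⟶ A₁.a) :
    (plusConst G Z).map f ≫ A₁.str = A₀.str ≫ f ↔
      G.map f ≫ coprod.inl ≫ A₁.str = (coprod.inl ≫ A₀.str) ≫ f ∧
        coprod.inr ≫ A₁.str = (coprod.inr ≫ A₀.str) ≫ f := by
  have hinl : coprod.inl ≫ (plusConst G Z).map f ≫ A₁.str = G.map f ≫ coprod.inl ≫ A₁.str :=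
    coprod.inl_map_assoc _ _ _
  have hinr : coprod.inr ≫ (plusConst G Z).map f ≫ A₁.str = coprod.inr ≫ A₁.str :=
    (coprod.inr_map_assoc _ _ _).trans (Category.id_comp _)
  constructor
  · intro h
    exact ⟨hinl.symm.trans ((congrArg (coprod.inl ≫ ·) h).trans (Category.assoc _ _ _).symm),
      hinr.symm.trans ((congrArg (coprod.inr ≫ ·) h).trans (Category.assoc _ _ _).symm)⟩
  · rintro ⟨h₁, h₂⟩
    exact coprod.hom_ext (hinl.trans (h₁.trans (Category.assoc _ _ _)))
      (hinr.trans (h₂.trans (Category.assoc _ _ _)))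

end PlusConstAlgebra

section

variable {E D : Type*} [Category E] [Category D] {L : E ⥤ D} {R : D ⥤ E} {F : E ⥤ E}
  {F' : D ⥤ D}

lemma Adjunction.homEquiv_inv_app_comp_map_comp (adj : L ⊣ R) (φ : L ⋙ F' ≅ F ⋙ L)
    {Y : E} {B Z : D} (m : L.obj Y ⟶ B) (k : F'.obj B ⟶ Z) :
    adj.homEquiv _ _ (φ.inv.app Y ≫ F'.map m ≫ k) =
      F.map (adj.homEquiv _ _ m) ≫
        adj.homEquiv _ _ (φ.inv.app (R.obj B) ≫ F'.map (adj.counit.app B) ≫ k) := by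
  have hm : L.map (adj.homEquiv _ _ m) ≫ adj.counit.app B = m := by
    rw [← adj.homEquiv_counit (g := adj.homEquiv _ _ m), Equiv.symm_apply_apply]
  have hφ := NatIso.naturality_1 φ (adj.homEquiv _ _ m)
  rw [Functor.comp_map, Functor.comp_map] at hφ
  rw [← adj.homEquiv_naturality_left, ← hφ]
  simp only [Category.assoc, Iso.hom_inv_id_app_assoc, ← F'.map_comp_assoc, hm]

end

section AlgebraTransfer

variable {D : Type*} [Category D] [HasBinaryCoproducts D] {L : C ⥤ D} {R : D ⥤ C}
  {F : C ⥤ C} {F' : D ⥤ D} {X : C}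

-- Both lifts are reducible, so that their carriers unfold inside the `HasBinaryCoproduct`
-- instances of `coprod`.
noncomputable abbrev liftAlgebraLeft (φ : L ⋙ F' ≅ F ⋙ L)
    (A : Endofunctor.Algebra (plusConst F X)) :
    Endofunctor.Algebra (plusConst F' (L.obj X)) where
  a := L.obj A.a
  str := coprod.desc (φ.hom.app A.a ≫ L.map (coprod.inl ≫ A.str)) (L.map (coprod.inr ≫ A.str))

noncomputable abbrev liftAlgebraRight (adj : L ⊣ R) (φ : L ⋙ F' ≅ F ⋙ L)
    (B : Endofunctor.Algebra (plusConst F' (L.obj X))) :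
    Endofunctor.Algebra (plusConst F X) where
  a := R.obj B.a
  str := coprod.desc
    (adj.homEquiv _ _ (φ.inv.app (R.obj B.a) ≫ F'.map (adj.counit.app B.a) ≫ coprod.inl ≫ B.str))
    (adj.homEquiv _ _ (coprod.inr ≫ B.str))

variable (adj : L ⊣ R) (φ : L ⋙ F' ≅ F ⋙ L)

lemma inl_comp_liftAlgebraLeft_str (A : Endofunctor.Algebra (plusConst F X)) :
    coprod.inl ≫ (liftAlgebraLeft φ A).str = φ.hom.app A.a ≫ L.map (coprod.inl ≫ A.str) :=
  coprod.inl_desc _ _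

lemma inr_comp_liftAlgebraLeft_str (A : Endofunctor.Algebra (plusConst F X)) :
    coprod.inr ≫ (liftAlgebraLeft φ A).str = L.map (coprod.inr ≫ A.str) :=
  coprod.inr_desc _ _

lemma inl_comp_liftAlgebraRight_str (B : Endofunctor.Algebra (plusConst F' (L.obj X))) :
    coprod.inl ≫ (liftAlgebraRight adj φ B).str =
      adj.homEquiv _ _
        (φ.inv.app (R.obj B.a) ≫ F'.map (adj.counit.app B.a) ≫ coprod.inl ≫ B.str) :=
  coprod.inl_desc _ _

lemma inr_comp_liftAlgebraRight_str (B : Endofunctor.Algebra (plusConst F' (L.obj X))) :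
    coprod.inr ≫ (liftAlgebraRight adj φ B).str = adj.homEquiv _ _ (coprod.inr ≫ B.str) :=
  coprod.inr_desc _ _

lemma liftAlgebra_isHom_iff (A : Endofunctor.Algebra (plusConst F X))
    (B : Endofunctor.Algebra (plusConst F' (L.obj X))) (m : (liftAlgebraLeft φ A).a ⟶ B.a) :
    (plusConst F' (L.obj X)).map m ≫ B.str = (liftAlgebraLeft φ A).str ≫ m ↔
      (plusConst F X).map (adj.homEquiv A.a B.a m) ≫ (liftAlgebraRight adj φ B).str =
        A.str ≫ adj.homEquiv A.a B.a m := by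
  rw [plusConst_map_comp_str_eq_iff,
    plusConst_map_comp_str_eq_iff (A₀ := A) (A₁ := liftAlgebraRight adj φ B),
    inl_comp_liftAlgebraLeft_str, inr_comp_liftAlgebraLeft_str, inl_comp_liftAlgebraRight_str,
    inr_comp_liftAlgebraRight_str, ← Adjunction.homEquiv_inv_app_comp_map_comp,
    ← adj.homEquiv_naturality_left, ← adj.homEquiv_naturality_left, Equiv.apply_eq_iff_eq,
    Equiv.apply_eq_iff_eq, Category.assoc, ← Iso.app_inv, Iso.inv_comp_eq, Iso.app_hom]
  exact Iff.rfl

noncomputable def liftAlgebraHomEquiv (A : Endofunctor.Algebra (plusConst F X))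
    (B : Endofunctor.Algebra (plusConst F' (L.obj X))) :
    (liftAlgebraLeft φ A ⟶ B) ≃ (A ⟶ liftAlgebraRight adj φ B) where
  toFun f := ⟨adj.homEquiv _ _ f.f, (liftAlgebra_isHom_iff adj φ A B f.f).mp f.h⟩
  invFun g := ⟨(adj.homEquiv _ _).symm g.f,
    (liftAlgebra_isHom_iff adj φ A B _).mpr (by simpa only [Equiv.apply_symm_apply] using g.h)⟩
  left_inv f := Endofunctor.Algebra.Hom.ext (Equiv.symm_apply_apply _ _)
  right_inv g := Endofunctor.Algebra.Hom.ext (Equiv.apply_symm_apply _ _)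

noncomputable def isInitialLiftAlgebraLeft {A : Endofunctor.Algebra (plusConst F X)}
    (hA : IsInitial A) : IsInitial (liftAlgebraLeft φ A) :=
  IsInitial.ofUniqueHom (fun B => (liftAlgebraHomEquiv adj φ A B).symm (hA.to _))
    (fun B _ => (liftAlgebraHomEquiv adj φ A B).injective (hA.hom_ext _ _))

end AlgebraTransfer

theorem sharp_of_initial_algebra_is_free_algebra_in_kleisli (F : C ⥤ C)
    [∀ X : C, HasInitial (Endofunctor.Algebra (plusConst F X))]
    (F' : Kleisli T ⥤ Kleisli T)
    (hlift : Kleisli.Adjunction.toKleisli T ⋙ F' = F ⋙ Kleisli.Adjunction.toKleisli T)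
    (X : C) :
    Nonempty (IsInitial (sharpAlgebra T F F' hlift X)) := by
  have hsharp : sharpAlgebra T F F' hlift X = liftAlgebraLeft (eqToIso hlift) (⊥_ _) := by
    simp only [sharpAlgebra, liftAlgebraLeft, eqToIso.hom, eqToHom_app]
    rfl
  exact ⟨hsharp ▸ isInitialLiftAlgebraLeft (Kleisli.Adjunction.adj T) _ initialIsInitial⟩
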